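/- arXiv:1201.5826 — 5 statements merged into one kernel-verified Lean document; each statement's English description precedes it below -/
import Mathlib

section
/- Let the coefficient assumptions hold and suppose for each ε ∈ (0,1), (n_ε, R_ε) is a nonnegative solution of the chemostat system with parameter ε and initial data n_ε(·,0) = n⁰, R_ε(·,0) = R⁰. Then for every T > 0, R_ε converges strongly to R_in in L¹((0,T) × ℝ) as ε → 0, i.e. ∫_0^T ∫_ℝ |R_ε(y,t) − R_in(y)| dy dt → 0 as ε → 0. -/
open MeasureTheory Filter Set Real Topology

/-!
Fix `ε` and write `κ = m̲ / ε²`. Consumption only lowers the resource, so `R_ε - R_in` decays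
from above like `|R⁰ - R_in| e^{-κt}`. Hence the coupling `∫ K (R_ε - R_in) dy` is at most
`K_M ‖R⁰ - R_in‖₁ e^{-κt}`, whose time integral divided by `ε` is `O(ε)`, and Gronwall bounds
`n_ε`, hence the consumption `∫ K n_ε dx`, on `[0, T]` uniformly in `ε`. With the consumption
bounded, the fast relaxation at rate `κ` also gives `R_in - R_ε ≤ |R⁰ - R_in| e^{-κt} + O(ε)`.
Integrating, `∫₀ᵀ ∫ |R_ε - R_in| dy dt = O(ε² + ε)`.
-/

theorem integral_mono_of_integrable_of_nonneg {α : Type*} [MeasurableSpace α] {μ : Measure α}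
    {f g : α → ℝ} (hgi : Integrable g μ) (hg : 0 ≤ᵐ[μ] g) (h : f ≤ᵐ[μ] g) :
    ∫ x, f x ∂μ ≤ ∫ x, g x ∂μ := by
  by_cases hfi : Integrable f μ
  · exact integral_mono_ae hfi hgi h
  · exact integral_undef hfi ▸ integral_nonneg_of_ae hg

theorem le_mul_exp_sub_of_hasDerivAt_le_mul {f f' φ φ' : ℝ → ℝ} {a b t : ℝ}
    (hf : ∀ s ∈ Icc a b, HasDerivAt f (f' s) s) (hφ : ∀ s ∈ Icc a b, HasDerivAt φ (φ' s) s)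
    (hle : ∀ s ∈ Icc a b, f' s ≤ φ' s * f s) (ht : t ∈ Icc a b) :
    f t ≤ f a * exp (φ t - φ a) := by
  have hg : ∀ s ∈ Icc a b, HasDerivAt (fun s => f s * exp (-φ s))
      ((f' s - φ' s * f s) * exp (-φ s)) s := fun s hs => by
    refine ((hf s hs).mul (hφ s hs).neg.exp).congr_deriv ?_
    simp only [Pi.neg_apply]; ring
  have hanti : AntitoneOn (fun s => f s * exp (-φ s)) (Icc a b) := by
    refine antitoneOn_of_hasDerivWithinAt_nonpos (f' := fun s => (f' s - φ' s * f s) * exp (-φ s))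
      (convex_Icc a b)
      (fun s hs => (hg s hs).continuousAt.continuousWithinAt) (fun s hs => ?_) (fun s hs => ?_)
    all_goals rw [interior_Icc] at hs
    · exact (hg s (Ioo_subset_Icc_self hs)).hasDerivWithinAt
    · exact mul_nonpos_of_nonpos_of_nonneg (sub_nonpos.2 (hle s (Ioo_subset_Icc_self hs)))
        (exp_nonneg _)
  have hdecr := hanti ⟨le_rfl, ht.1.trans ht.2⟩ ht ht.1
  calc f t = f t * exp (-φ t) * exp (φ t) := by rw [mul_assoc, ← exp_add]; simp
    _ ≤ f a * exp (-φ a) * exp (φ t) := by gcongr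
    _ = f a * exp (φ t - φ a) := by rw [mul_assoc, ← exp_add]; ring_nf

theorem le_mul_exp_neg_of_hasDerivAt_le_neg_mul {f f' : ℝ → ℝ} {μ κ A T t : ℝ}
    (hf : ∀ s ∈ Icc 0 T, HasDerivAt f (f' s) s) (hle : ∀ s ∈ Icc 0 T, f' s ≤ -μ * f s)
    (hκμ : κ ≤ μ) (hf0 : f 0 ≤ A) (hA : 0 ≤ A) (ht : t ∈ Icc 0 T) :
    f t ≤ A * exp (-κ * t) := by
  have hφ : ∀ s ∈ Icc (0 : ℝ) T, HasDerivAt (fun s => -μ * s) (-μ) s := fun s _ => by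
    simpa using (hasDerivAt_id s).const_mul (-μ)
  calc f t ≤ f 0 * exp (-μ * t - -μ * 0) := le_mul_exp_sub_of_hasDerivAt_le_mul hf hφ hle ht
    _ ≤ A * exp (-μ * t) := by rw [mul_zero, sub_zero]; gcongr
    _ ≤ A * exp (-κ * t) := by gcongr; exact ht.1

theorem setIntegral_exp_neg_mul_Ioc_le {κ T : ℝ} (hκ : 0 < κ) :
    ∫ t in Ioc 0 T, exp (-κ * t) ≤ 1 / κ := by
  calc ∫ t in Ioc 0 T, exp (-κ * t) ≤ ∫ t in Ioi 0, exp (-κ * t) :=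
        setIntegral_mono_set (exp_neg_integrableOn_Ioi 0 hκ)
          (Eventually.of_forall fun _ => (exp_pos _).le) Ioc_subset_Ioi_self.eventuallyLE
    _ = 1 / κ := by rw [integral_exp_mul_Ioi (neg_neg_of_pos hκ)]; field_simp; simp

/- `r` is the resource `R_ε(y, ·)` at a fixed `y`, with `μ = m(y) / ε²`, `δ = 1 / ε` and `c` the
consumption `∫ K(x, y) n_ε(x, ·) dx`. -/
section Resource

variable {r c : ℝ → ℝ} {μ κ ρ δ I T t : ℝ}

theorem resource_sub_le_of_hasDerivAt
    (hr : ∀ s ∈ Icc 0 T, HasDerivAt r (μ * (ρ - r s) - δ * r s * c s) s)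
    (hr0 : ∀ s ∈ Icc 0 T, 0 ≤ r s) (hc0 : ∀ s ∈ Icc 0 T, 0 ≤ c s) (hδ : 0 ≤ δ) (hκμ : κ ≤ μ)
    (ht : t ∈ Icc 0 T) :
    r t - ρ ≤ |r 0 - ρ| * exp (-κ * t) :=
  le_mul_exp_neg_of_hasDerivAt_le_neg_mul (fun s hs => (hr s hs).sub_const ρ)
    (fun s hs => by nlinarith [mul_nonneg (mul_nonneg hδ (hr0 s hs)) (hc0 s hs)])
    hκμ (le_abs_self _) (abs_nonneg _) ht

theorem sub_resource_le_of_hasDerivAt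
    (hr : ∀ s ∈ Icc 0 T, HasDerivAt r (μ * (ρ - r s) - δ * r s * c s) s)
    (hr0 : ∀ s ∈ Icc 0 T, 0 ≤ r s) (hc0 : ∀ s ∈ Icc 0 T, 0 ≤ c s) (hcI : ∀ s ∈ Icc 0 T, c s ≤ I)
    (hδ : 0 ≤ δ) (hκ : 0 < κ) (hκμ : κ ≤ μ) (ht : t ∈ Icc 0 T) :
    ρ - r t ≤ |r 0 - ρ| * exp (-κ * t) + δ / κ * I * (ρ + |r 0 - ρ|) := by
  have h0 : (0 : ℝ) ∈ Icc 0 T := ⟨le_rfl, ht.1.trans ht.2⟩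
  set D := δ / κ * I * (ρ + |r 0 - ρ|)
  have hS : 0 ≤ ρ + |r 0 - ρ| := by linarith [hr0 0 h0, le_abs_self (r 0 - ρ)]
  have hD : 0 ≤ D := by have := (hc0 0 h0).trans (hcI 0 h0); positivity
  have hrS : ∀ s ∈ Icc 0 T, r s ≤ ρ + |r 0 - ρ| := fun s hs => by
    have := resource_sub_le_of_hasDerivAt hr hr0 hc0 hδ hκμ hs
    have : exp (-κ * s) ≤ 1 := exp_le_one_iff.2 (by nlinarith [hs.1])
    nlinarith [abs_nonneg (r 0 - ρ)]
  -- `ρ - r - D` satisfies the decay inequality because `κ D` dominates the consumption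
  have hconsumption : ∀ s ∈ Icc 0 T, δ * r s * c s ≤ μ * D := fun s hs => calc
    δ * r s * c s ≤ δ * (ρ + |r 0 - ρ|) * I :=
      mul_le_mul (mul_le_mul_of_nonneg_left (hrS s hs) hδ) (hcI s hs) (hc0 s hs) (by positivity)
    _ = κ * D := by simp only [D]; field_simp
    _ ≤ μ * D := by gcongr
  have := le_mul_exp_neg_of_hasDerivAt_le_neg_mul (f := fun s => ρ - r s - D)
    (fun s hs => ((hr s hs).const_sub ρ).sub_const D)
    (fun s hs => by nlinarith [hconsumption s hs]) hκμ
    (by linarith [neg_abs_le (r 0 - ρ)]) (abs_nonneg _) ht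
  linarith

theorem abs_resource_sub_le_of_hasDerivAt
    (hr : ∀ s ∈ Icc 0 T, HasDerivAt r (μ * (ρ - r s) - δ * r s * c s) s)
    (hr0 : ∀ s ∈ Icc 0 T, 0 ≤ r s) (hc0 : ∀ s ∈ Icc 0 T, 0 ≤ c s) (hcI : ∀ s ∈ Icc 0 T, c s ≤ I)
    (hδ : 0 ≤ δ) (hκ : 0 < κ) (hκμ : κ ≤ μ) (ht : t ∈ Icc 0 T) :
    |r t - ρ| ≤ |r 0 - ρ| * exp (-κ * t) + δ / κ * I * (ρ + |r 0 - ρ|) := by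
  have h0 : (0 : ℝ) ∈ Icc 0 T := ⟨le_rfl, ht.1.trans ht.2⟩
  have hS : 0 ≤ ρ + |r 0 - ρ| := by linarith [hr0 0 h0, le_abs_self (r 0 - ρ)]
  have hD : 0 ≤ δ / κ * I * (ρ + |r 0 - ρ|) := by
    have := (hc0 0 h0).trans (hcI 0 h0); positivity
  rw [abs_le]
  constructor
  · linarith [sub_resource_le_of_hasDerivAt hr hr0 hc0 hcI hδ hκ hκμ ht]
  · linarith [resource_sub_le_of_hasDerivAt hr hr0 hc0 hδ hκμ ht]

end Resource

theorem le_mul_exp_of_hasDerivAt_population {p J : ℝ → ℝ} {α αM δ B κ T t : ℝ}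
    (hp : ∀ s ∈ Icc 0 T, HasDerivAt p (p s * (α + δ * J s)) s) (hp0 : ∀ s ∈ Icc 0 T, 0 ≤ p s)
    (hJ : ∀ s ∈ Icc 0 T, J s ≤ B * exp (-κ * s)) (hα : α ≤ αM) (hδ : 0 ≤ δ) (hB : 0 ≤ B)
    (hκ : 0 < κ) (ht : t ∈ Icc 0 T) :
    p t ≤ p 0 * exp (αM * t + δ * B / κ) := by
  set φ : ℝ → ℝ := fun s => αM * s - δ * B / κ * exp (-κ * s)
  have hφ : ∀ s ∈ Icc (0 : ℝ) T, HasDerivAt φ (αM + δ * B * exp (-κ * s)) s := fun s _ => by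
    refine (((hasDerivAt_id s).const_mul αM).sub
      (((hasDerivAt_id s).const_mul (-κ)).exp.const_mul (δ * B / κ))).congr_deriv ?_
    simp only [id]
    field_simp
    ring
  have hgrowth : ∀ s ∈ Icc 0 T, p s * (α + δ * J s) ≤ (αM + δ * B * exp (-κ * s)) * p s :=
    fun s hs => calc
      p s * (α + δ * J s) ≤ p s * (αM + δ * (B * exp (-κ * s))) := by
        gcongr
        exacts [hp0 s hs, hJ s hs]
      _ = (αM + δ * B * exp (-κ * s)) * p s := by ring
  calc p t ≤ p 0 * exp (φ t - φ 0) := le_mul_exp_sub_of_hasDerivAt_le_mul hp hφ hgrowth ht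
    _ ≤ p 0 * exp (αM * t + δ * B / κ) := by
      gcongr
      · exact hp0 0 ⟨le_rfl, ht.1.trans ht.2⟩
      · simp only [φ, mul_zero, exp_zero, mul_one]
        nlinarith [mul_nonneg (div_nonneg (mul_nonneg hδ hB) hκ.le) (exp_pos (-κ * t)).le]

structure IsChemostatSolution (a m Rin : ℝ → ℝ) (K : ℝ → ℝ → ℝ) (ε : ℝ) (n0 R0 : ℝ → ℝ)
    (n R : ℝ → ℝ → ℝ) : Prop where
  hasDerivAt_n : ∀ x t, 0 ≤ t → HasDerivAt (fun s => n x s)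
    (n x t * (a x + (1 / ε) * ∫ y, K x y * (R y t - Rin y))) t
  hasDerivAt_R : ∀ y t, 0 ≤ t → HasDerivAt (fun s => R y s)
    (m y / ε ^ 2 * (Rin y - R y t) - (1 / ε) * R y t * ∫ x, K x y * n x t) t
  n_nonneg : ∀ x t, 0 ≤ t → 0 ≤ n x t
  R_nonneg : ∀ y t, 0 ≤ t → 0 ≤ R y t
  n_zero : ∀ x, n x 0 = n0 x
  R_zero : ∀ y, R y 0 = R0 y

namespace IsChemostatSolution

variable {a m Rin n0 R0 : ℝ → ℝ} {K : ℝ → ℝ → ℝ} {ε aM mlow KM I T t : ℝ} {n R : ℝ → ℝ → ℝ}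

theorem consumption_nonneg (h : IsChemostatSolution a m Rin K ε n0 R0 n R)
    (hK : ∀ x y, 0 ≤ K x y) (y : ℝ) (ht : 0 ≤ t) : 0 ≤ ∫ x, K x y * n x t :=
  integral_nonneg fun x => mul_nonneg (hK x y) (h.n_nonneg x t ht)

theorem resource_sub_le (h : IsChemostatSolution a m Rin K ε n0 R0 n R) (hε : 0 < ε)
    (hm : ∀ y, mlow ≤ m y) (hK : ∀ x y, 0 ≤ K x y) (y : ℝ) (ht : 0 ≤ t) :
    R y t - Rin y ≤ |R0 y - Rin y| * exp (-(mlow / ε ^ 2) * t) := by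
  have := resource_sub_le_of_hasDerivAt (T := t) (fun s hs => h.hasDerivAt_R y s hs.1)
    (fun s hs => h.R_nonneg y s hs.1) (fun s hs => h.consumption_nonneg hK y hs.1)
    (one_div_nonneg.2 hε.le) (div_le_div_of_nonneg_right (hm y) (sq_nonneg ε)) ⟨ht, le_rfl⟩
  rwa [h.R_zero] at this

theorem coupling_le (h : IsChemostatSolution a m Rin K ε n0 R0 n R) (hε : 0 < ε)
    (hm : ∀ y, mlow ≤ m y) (hK : ∀ x y, 0 ≤ K x y) (hKM : ∀ x y, K x y ≤ KM)
    (hint : Integrable fun y => |R0 y - Rin y|) (x : ℝ) (ht : 0 ≤ t) :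
    ∫ y, K x y * (R y t - Rin y) ≤ KM * (∫ y, |R0 y - Rin y|) * exp (-(mlow / ε ^ 2) * t) := by
  have hKM0 : 0 ≤ KM := (hK 0 0).trans (hKM 0 0)
  have hpointwise : ∀ y, K x y * (R y t - Rin y)
      ≤ KM * exp (-(mlow / ε ^ 2) * t) * |R0 y - Rin y| := fun y => calc
    K x y * (R y t - Rin y) ≤ K x y * (|R0 y - Rin y| * exp (-(mlow / ε ^ 2) * t)) :=
      mul_le_mul_of_nonneg_left (h.resource_sub_le hε hm hK y ht) (hK x y)
    _ ≤ KM * (|R0 y - Rin y| * exp (-(mlow / ε ^ 2) * t)) :=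
      mul_le_mul_of_nonneg_right (hKM x y) (by positivity)
    _ = KM * exp (-(mlow / ε ^ 2) * t) * |R0 y - Rin y| := by ring
  calc ∫ y, K x y * (R y t - Rin y)
      ≤ ∫ y, KM * exp (-(mlow / ε ^ 2) * t) * |R0 y - Rin y| :=
        integral_mono_of_integrable_of_nonneg (hint.const_mul _)
          (Eventually.of_forall fun y => by positivity) (Eventually.of_forall hpointwise)
    _ = KM * (∫ y, |R0 y - Rin y|) * exp (-(mlow / ε ^ 2) * t) := by
      rw [integral_const_mul]; ring

theorem population_le (h : IsChemostatSolution a m Rin K ε n0 R0 n R) (hε : 0 < ε)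
    (hmlow : 0 < mlow) (hm : ∀ y, mlow ≤ m y) (hK : ∀ x y, 0 ≤ K x y) (hKM : ∀ x y, K x y ≤ KM)
    (hint : Integrable fun y => |R0 y - Rin y|) (ha : ∀ x, a x ≤ aM) (x : ℝ) (ht : 0 ≤ t) :
    n x t ≤ n0 x * exp (aM * t + ε * (KM * ∫ y, |R0 y - Rin y|) / mlow) := by
  have hB : 0 ≤ KM * ∫ y, |R0 y - Rin y| :=
    mul_nonneg ((hK 0 0).trans (hKM 0 0)) (integral_nonneg fun _ => abs_nonneg _)
  have := le_mul_exp_of_hasDerivAt_population (T := t) (fun s hs => h.hasDerivAt_n x s hs.1)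
    (fun s hs => h.n_nonneg x s hs.1) (fun s hs => h.coupling_le hε hm hK hKM hint x hs.1)
    (ha x) (one_div_nonneg.2 hε.le) hB (by positivity) ⟨ht, le_rfl⟩
  rw [h.n_zero] at this
  convert this using 4
  field_simp

theorem consumption_le (h : IsChemostatSolution a m Rin K ε n0 R0 n R) (hε : 0 < ε)
    (hε1 : ε ≤ 1) (hmlow : 0 < mlow) (hm : ∀ y, mlow ≤ m y) (hK : ∀ x y, 0 ≤ K x y)
    (hKM : ∀ x y, K x y ≤ KM) (hint : Integrable fun y => |R0 y - Rin y|) (hn0 : Integrable n0)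
    (ha : ∀ x, a x ≤ aM) (haM : 0 ≤ aM) (y : ℝ) (ht : t ∈ Icc 0 T) :
    ∫ x, K x y * n x t ≤ KM * exp (aM * T + KM * (∫ y, |R0 y - Rin y|) / mlow) * ∫ x, n0 x := by
  set C0 := ∫ y, |R0 y - Rin y|
  have hKM0 : 0 ≤ KM := (hK 0 0).trans (hKM 0 0)
  have hexponent : aM * t + ε * (KM * C0) / mlow ≤ aM * T + KM * C0 / mlow :=
    add_le_add (mul_le_mul_of_nonneg_left ht.2 haM) (div_le_div_of_nonneg_right
      (mul_le_of_le_one_left (mul_nonneg hKM0 (integral_nonneg fun _ => abs_nonneg _)) hε1)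
      hmlow.le)
  have hpointwise : ∀ x, K x y * n x t ≤ KM * exp (aM * T + KM * C0 / mlow) * n0 x := fun x => by
    have hn0x : 0 ≤ n0 x := h.n_zero x ▸ h.n_nonneg x 0 le_rfl
    calc K x y * n x t ≤ KM * (n0 x * exp (aM * t + ε * (KM * C0) / mlow)) :=
          mul_le_mul (hKM x y) (h.population_le hε hmlow hm hK hKM hint ha x ht.1)
            (h.n_nonneg x t ht.1) hKM0
      _ ≤ KM * (n0 x * exp (aM * T + KM * C0 / mlow)) := by gcongr
      _ = KM * exp (aM * T + KM * C0 / mlow) * n0 x := by ring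
  calc ∫ x, K x y * n x t ≤ ∫ x, KM * exp (aM * T + KM * C0 / mlow) * n0 x :=
        integral_mono_of_nonneg (Eventually.of_forall fun x => mul_nonneg (hK x y)
          (h.n_nonneg x t ht.1)) (hn0.const_mul _) (Eventually.of_forall hpointwise)
    _ = KM * exp (aM * T + KM * C0 / mlow) * ∫ x, n0 x := integral_const_mul _ _

theorem integral_abs_resource_sub_le (h : IsChemostatSolution a m Rin K ε n0 R0 n R)
    (hε : 0 < ε) (hmlow : 0 < mlow) (hm : ∀ y, mlow ≤ m y) (hK : ∀ x y, 0 ≤ K x y)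
    (hRin : Integrable Rin) (hint : Integrable fun y => |R0 y - Rin y|)
    (hI : ∀ y, ∀ s ∈ Icc 0 T, ∫ x, K x y * n x s ≤ I) (ht : t ∈ Icc 0 T) :
    ∫ y, |R y t - Rin y| ≤ (∫ y, |R0 y - Rin y|) * exp (-(mlow / ε ^ 2) * t)
      + ε / mlow * I * ∫ y, (Rin y + |R0 y - Rin y|) := by
  have hpointwise : ∀ y, |R y t - Rin y| ≤ |R0 y - Rin y| * exp (-(mlow / ε ^ 2) * t)
      + ε / mlow * I * (Rin y + |R0 y - Rin y|) := fun y => by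
    have := abs_resource_sub_le_of_hasDerivAt (fun s hs => h.hasDerivAt_R y s hs.1)
      (fun s hs => h.R_nonneg y s hs.1) (fun s hs => h.consumption_nonneg hK y hs.1)
      (hI y) (one_div_nonneg.2 hε.le) (by positivity)
      (div_le_div_of_nonneg_right (hm y) (sq_nonneg ε)) ht
    rw [h.R_zero] at this
    convert this using 3
    field_simp
  have hint_exp := hint.mul_const (exp (-(mlow / ε ^ 2) * t))
  have hint_S : Integrable fun y => ε / mlow * I * (Rin y + |R0 y - Rin y|) :=
    (hRin.add hint).const_mul _
  calc ∫ y, |R y t - Rin y|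
      ≤ ∫ y, (|R0 y - Rin y| * exp (-(mlow / ε ^ 2) * t)
        + ε / mlow * I * (Rin y + |R0 y - Rin y|)) :=
        integral_mono_of_nonneg (Eventually.of_forall fun _ => abs_nonneg _)
          (hint_exp.add hint_S) (Eventually.of_forall hpointwise)
    _ = _ := by rw [integral_add hint_exp hint_S, integral_mul_const, integral_const_mul]

theorem integral_integral_abs_resource_sub_le (h : IsChemostatSolution a m Rin K ε n0 R0 n R)
    (hε : 0 < ε) (hmlow : 0 < mlow) (hm : ∀ y, mlow ≤ m y) (hK : ∀ x y, 0 ≤ K x y)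
    (hRin : Integrable Rin) (hint : Integrable fun y => |R0 y - Rin y|) (hT : 0 ≤ T)
    (hI : ∀ y, ∀ s ∈ Icc 0 T, ∫ x, K x y * n x s ≤ I) :
    ∫ t in Ioc 0 T, ∫ y, |R y t - Rin y|
      ≤ (∫ y, |R0 y - Rin y|) / mlow * ε ^ 2
        + T * (I / mlow * ∫ y, (Rin y + |R0 y - Rin y|)) * ε := by
  set C0 := ∫ y, |R0 y - Rin y|
  set S := ∫ y, (Rin y + |R0 y - Rin y|)
  have hκ : 0 < mlow / ε ^ 2 := by positivity
  have hint_exp : IntegrableOn (fun t => C0 * exp (-(mlow / ε ^ 2) * t)) (Ioc 0 T) :=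
    ((exp_neg_integrableOn_Ioi 0 hκ).mono_set Ioc_subset_Ioi_self).const_mul C0
  have hint_const : IntegrableOn (fun _ => ε / mlow * I * S) (Ioc (0 : ℝ) T) :=
    integrableOn_const measure_Ioc_lt_top.ne
  calc ∫ t in Ioc 0 T, ∫ y, |R y t - Rin y|
      ≤ ∫ t in Ioc 0 T, (C0 * exp (-(mlow / ε ^ 2) * t) + ε / mlow * I * S) :=
        integral_mono_of_nonneg
          (Eventually.of_forall fun _ => integral_nonneg fun _ => abs_nonneg _)
          (hint_exp.add hint_const) ((ae_restrict_iff' measurableSet_Ioc).2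
            (Eventually.of_forall fun t ht => h.integral_abs_resource_sub_le hε hmlow hm hK hRin
              hint hI (Ioc_subset_Icc_self ht)))
    _ = C0 * (∫ t in Ioc 0 T, exp (-(mlow / ε ^ 2) * t)) + T * (ε / mlow * I * S) := by
      rw [integral_add hint_exp hint_const, integral_const_mul, setIntegral_const,
        volume_real_Ioc_of_le hT, sub_zero, smul_eq_mul]
    _ ≤ C0 * (1 / (mlow / ε ^ 2)) + T * (ε / mlow * I * S) := by
      have hC0 : 0 ≤ C0 := integral_nonneg fun _ => abs_nonneg _
      gcongr
      exact setIntegral_exp_neg_mul_Ioc_le hκ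
    _ = C0 / mlow * ε ^ 2 + T * (I / mlow * S) * ε := by
      field_simp

end IsChemostatSolution

theorem resource_converges_to_Rin_general
    (n0 R0 Rin a m : ℝ → ℝ) (K : ℝ → ℝ → ℝ)
    (aM mlow KM : ℝ)
    -- initial data and coefficient assumptions
    (hn0int : Integrable n0)
    (hR0int : Integrable R0)
    (hRinint : Integrable Rin)
    (haM : ∀ x, |a x| ≤ aM)
    (hmlow : 0 < mlow) (hm : ∀ y, mlow ≤ m y)
    (hKnn : ∀ x y, 0 ≤ K x y) (hKM : ∀ x y, K x y ≤ KM)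
    -- the chemostat solutions, for each ε ∈ (0,1)
    (nE RE : ℝ → ℝ → ℝ → ℝ)
    (hnEpde : ∀ ε ∈ Set.Ioo (0:ℝ) 1, ∀ x, ∀ t, 0 ≤ t →
      HasDerivAt (fun s => nE ε x s)
        (nE ε x t * (a x + (1/ε) * ∫ y, K x y * (RE ε y t - Rin y))) t)
    (hREpde : ∀ ε ∈ Set.Ioo (0:ℝ) 1, ∀ y, ∀ t, 0 ≤ t →
      HasDerivAt (fun s => RE ε y s)
        (m y / ε^2 * (Rin y - RE ε y t) - (1/ε) * RE ε y t * ∫ x, K x y * nE ε x t) t)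
    (hnEnn : ∀ ε ∈ Set.Ioo (0:ℝ) 1, ∀ x, ∀ t, 0 ≤ t → 0 ≤ nE ε x t)
    (hREnn : ∀ ε ∈ Set.Ioo (0:ℝ) 1, ∀ y, ∀ t, 0 ≤ t → 0 ≤ RE ε y t)
    (hnE0 : ∀ ε ∈ Set.Ioo (0:ℝ) 1, ∀ x, nE ε x 0 = n0 x)
    (hRE0 : ∀ ε ∈ Set.Ioo (0:ℝ) 1, ∀ y, RE ε y 0 = R0 y) :
    ∀ T > 0,
      Tendsto (fun ε => ∫ t in Set.Ioc (0:ℝ) T, ∫ y, |RE ε y t - Rin y|)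
        (nhdsWithin 0 (Set.Ioo 0 1)) (nhds 0) := by
  intro T hT
  set C0 := ∫ y, |R0 y - Rin y|
  set S := ∫ y, (Rin y + |R0 y - Rin y|)
  set I := KM * exp (aM * T + KM * C0 / mlow) * ∫ x, n0 x
  have hint : Integrable fun y => |R0 y - Rin y| := (hR0int.sub hRinint).abs
  have hbound : ∀ ε ∈ Ioo (0 : ℝ) 1,
      ∫ t in Ioc 0 T, ∫ y, |RE ε y t - Rin y| ≤ C0 / mlow * ε ^ 2 + T * (I / mlow * S) * ε := by
    intro ε hε
    have hsol : IsChemostatSolution a m Rin K ε n0 R0 (nE ε) (RE ε) :=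
      ⟨hnEpde ε hε, hREpde ε hε, hnEnn ε hε, hREnn ε hε, hnE0 ε hε, hRE0 ε hε⟩
    exact hsol.integral_integral_abs_resource_sub_le hε.1 hmlow hm hKnn hRinint hint hT.le
      fun y s hs => hsol.consumption_le hε.1 hε.2.le hmlow hm hKnn hKM hint hn0int
        (fun x => (abs_le.1 (haM x)).2) ((abs_nonneg _).trans (haM 0)) y hs
  have hlim : Tendsto (fun ε => C0 / mlow * ε ^ 2 + T * (I / mlow * S) * ε)
      (𝓝[Ioo 0 1] 0) (𝓝 0) := by
    refine tendsto_nhdsWithin_of_tendsto_nhds ?_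
    have hcont : Continuous fun ε : ℝ => C0 / mlow * ε ^ 2 + T * (I / mlow * S) * ε := by
      fun_prop
    simpa using hcont.tendsto 0
  refine tendsto_of_tendsto_of_tendsto_of_le_of_le' tendsto_const_nhds hlim ?_ ?_
  · exact Eventually.of_forall fun ε =>
      setIntegral_nonneg measurableSet_Ioc fun t _ => integral_nonneg fun y => abs_nonneg _
  · exact eventually_nhdsWithin_of_forall hbound

/-- Under the coefficient assumptions, the resource densities `RE ε`
of the chemostat system converge strongly to `Rin` in `L¹((0,T) × ℝ)` as `ε → 0`. -/
theorem resource_converges_to_Rin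
    (n0 R0 Rin a m : ℝ → ℝ) (K : ℝ → ℝ → ℝ)
    (aM mlow mup KM : ℝ)
    -- initial data and coefficient assumptions
    (hn0int : Integrable n0) (hn0bdd : ∃ C, ∀ x, |n0 x| ≤ C)
    (hR0int : Integrable R0) (hR0bdd : ∃ C, ∀ y, |R0 y| ≤ C)
    (hRinint : Integrable Rin) (hRinbdd : ∃ C, ∀ y, |Rin y| ≤ C)
    (hn0nn : ∀ x, 0 ≤ n0 x) (hR0nn : ∀ y, 0 ≤ R0 y) (hRinnn : ∀ y, 0 ≤ Rin y)
    (haM : ∀ x, |a x| ≤ aM)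
    (hmlow : 0 < mlow) (hm : ∀ y, mlow ≤ m y) (hmup : ∀ y, m y ≤ mup)
    (hKnn : ∀ x y, 0 ≤ K x y) (hKM : ∀ x y, K x y ≤ KM)
    (hKuc : UniformContinuous (fun p : ℝ × ℝ => K p.1 p.2))
    -- the chemostat solutions, for each ε ∈ (0,1)
    (nE RE : ℝ → ℝ → ℝ → ℝ)
    (hnEpde : ∀ ε ∈ Set.Ioo (0:ℝ) 1, ∀ x, ∀ t, 0 ≤ t →
      HasDerivAt (fun s => nE ε x s)
        (nE ε x t * (a x + (1/ε) * ∫ y, K x y * (RE ε y t - Rin y))) t)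
    (hREpde : ∀ ε ∈ Set.Ioo (0:ℝ) 1, ∀ y, ∀ t, 0 ≤ t →
      HasDerivAt (fun s => RE ε y s)
        (m y / ε^2 * (Rin y - RE ε y t) - (1/ε) * RE ε y t * ∫ x, K x y * nE ε x t) t)
    (hnEnn : ∀ ε ∈ Set.Ioo (0:ℝ) 1, ∀ x, ∀ t, 0 ≤ t → 0 ≤ nE ε x t)
    (hREnn : ∀ ε ∈ Set.Ioo (0:ℝ) 1, ∀ y, ∀ t, 0 ≤ t → 0 ≤ RE ε y t)
    (hnE0 : ∀ ε ∈ Set.Ioo (0:ℝ) 1, ∀ x, nE ε x 0 = n0 x)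
    (hRE0 : ∀ ε ∈ Set.Ioo (0:ℝ) 1, ∀ y, RE ε y 0 = R0 y) :
    ∀ T > 0,
      Tendsto (fun ε => ∫ t in Set.Ioc (0:ℝ) T, ∫ y, |RE ε y t - Rin y|)
        (nhdsWithin 0 (Set.Ioo 0 1)) (nhds 0) :=
  resource_converges_to_Rin_general n0 R0 Rin a m K aM mlow KM hn0int hR0int hRinint haM hmlow hm
    hKnn hKM nE RE hnEpde hREpde hnEnn hREnn hnE0 hRE0
end

section
/- Let α > 0, β > 0, and let γ be defined by γ(2α + β) = α². Then the function c(x,x') := √(π/(2α+β)) · e^{−[αx² + α(x')² − γ(x+x')²]} is not a function of x − x' alone: there exist x₁, x₁', x₂, x₂' ∈ ℝ with x₁ − x₁' = x₂ − x₂' but c(x₁, x₁') ≠ c(x₂, x₂'). In particular, c(x,x') is not equal to e^{−(α−γ)(x−x')²} √(π/(2α+β)) for all x, x' when β ≠ 0. -/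
open Real

/-! On the diagonal `x = x'` the exponent of `c` is `-2(α - 2γ)x²`, and `γ(2α + β) = α²` gives
`(α - 2γ)(2α + β) = αβ > 0`. So `c` is not constant on the diagonal, although `x - x'` is. -/

noncomputable def convertedKernel (α β γ x x' : ℝ) : ℝ :=
  √(π / (2 * α + β)) * exp (-(α * x ^ 2 + α * x' ^ 2 - γ * (x + x') ^ 2))

section

variable {α β γ : ℝ}

lemma sub_two_mul_mul_eq_mul (hγ : γ * (2 * α + β) = α ^ 2) :
    (α - 2 * γ) * (2 * α + β) = α * β := by
  linear_combination (-2) * hγ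

lemma two_mul_lt_of_mul_eq_sq (hα : 0 < α) (hβ : 0 < β) (hγ : γ * (2 * α + β) = α ^ 2) :
    2 * γ < α := by
  have hprod : 0 < (α - 2 * γ) * (2 * α + β) := by
    rw [sub_two_mul_mul_eq_mul hγ]
    positivity
  have hsub : 0 < α - 2 * γ := pos_of_mul_pos_left hprod (by positivity)
  linarith

lemma convertedKernel_diag (x : ℝ) :
    convertedKernel α β γ x x = √(π / (2 * α + β)) * exp (-(2 * (α - 2 * γ) * x ^ 2)) := by
  unfold convertedKernel
  ring_nf

lemma convertedKernel_zero_ne_one (hs : 0 < 2 * α + β) (hγ : 2 * γ ≠ α) :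
    convertedKernel α β γ 0 0 ≠ convertedKernel α β γ 1 1 := by
  have hsqrt : √(π / (2 * α + β)) ≠ 0 := (sqrt_pos.mpr (div_pos pi_pos hs)).ne'
  rw [convertedKernel_diag, convertedKernel_diag, Ne, mul_right_inj' hsqrt, exp_eq_exp]
  intro h
  exact hγ (by linarith)

end

/-- For `α > 0`, `β > 0` and `γ(2α+β) = α²`, the converted kernel
`c(x,x') = √(π/(2α+β)) e^{−[αx² + α(x')² − γ(x+x')²]}` is not a function of
`x − x'` alone; in particular it is not equal to
`e^{−(α−γ)(x−x')²} √(π/(2α+β))` for all `x, x'`. -/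
theorem converted_kernel_not_gaussian (α β γ : ℝ) (hα : 0 < α) (hβ : 0 < β)
    (hγ : γ * (2 * α + β) = α ^ 2) :
    (∃ x₁ x₁' x₂ x₂' : ℝ, x₁ - x₁' = x₂ - x₂' ∧
      Real.sqrt (π / (2 * α + β)) *
          Real.exp (-(α * x₁^2 + α * x₁'^2 - γ * (x₁ + x₁')^2))
        ≠ Real.sqrt (π / (2 * α + β)) *
            Real.exp (-(α * x₂^2 + α * x₂'^2 - γ * (x₂ + x₂')^2))) ∧
    ¬ (∀ x x' : ℝ,
        Real.sqrt (π / (2 * α + β)) *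
            Real.exp (-(α * x^2 + α * x'^2 - γ * (x + x')^2))
          = Real.exp (-(α - γ) * (x - x')^2) * Real.sqrt (π / (2 * α + β))) := by
  have hne : convertedKernel α β γ 0 0 ≠ convertedKernel α β γ 1 1 :=
    convertedKernel_zero_ne_one (by positivity) (two_mul_lt_of_mul_eq_sq hα hβ hγ).ne
  refine ⟨⟨0, 0, 1, 1, by norm_num, hne⟩, fun h => hne ?_⟩
  calc convertedKernel α β γ 0 0
      = exp (-(α - γ) * (0 - 0) ^ 2) * √(π / (2 * α + β)) := h 0 0
    _ = exp (-(α - γ) * (1 - 1) ^ 2) * √(π / (2 * α + β)) := by norm_num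
    _ = convertedKernel α β γ 1 1 := (h 1 1).symm
end

section
/- Suppose (n_ε, R_ε) solves the chemostat system with parameter ε > 0 (with all integrals below finite and differentiation under the integral sign valid). Define c(x,x') := ∫_ℝ K(x,y)(R_in(y)/m(y))K(x',y) dy and I_ε(x,t) := −ε ∂_t ∫_ℝ (K(x,y)/m(y)) R_ε(y,t) dy + ∫_ℝ K(x,y) ((R_in(y) − R_ε(y,t))/m(y)) ∫_ℝ K(x',y) n_ε(x',t) dx' dy. Then for all x ∈ ℝ and t ≥ 0: (1/ε) ∫_ℝ K(x,y)(R_ε(y,t) − R_in(y)) dy = −∫_ℝ c(x,x') n_ε(x',t) dx' + I_ε(x,t), and consequently ∂_t n_ε(x,t) = n_ε(x,t)[a(x) − ∫_ℝ c(x,x') n_ε(x',t) dx' + I_ε(x,t)]. -/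
/-!
The resource equation is fast (relaxation rate `m/ε²`), so it can be solved algebraically for
`R_ε − R_in`: `R_ε − R_in = −ε (R_ε/m) ∫ K n_ε − (ε²/m) ∂ₜR_ε`. Substituting this into the
growth term `(1/ε) ∫ K (R_ε − R_in)` and writing `R_ε = R_in − (R_in − R_ε)` in the first summand
splits it into the competition term `−∫ c n_ε` (after Fubini) and the remainder `I_ε`.
-/

open MeasureTheory

theorem resource_sub_inflow_eq {ε m Rin R F Rt : ℝ} (hε : ε ≠ 0) (hm : m ≠ 0)
    (hRt : Rt = m / ε ^ 2 * (Rin - R) - 1 / ε * R * F) :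
    R - Rin = -(ε * (R / m) * F) - ε ^ 2 / m * Rt := by
  rw [hRt]
  field_simp
  ring

theorem inv_mul_consumption_eq {ε m Rin R F Rt : ℝ} (k : ℝ) (hε : ε ≠ 0) (hm : m ≠ 0)
    (hRt : Rt = m / ε ^ 2 * (Rin - R) - 1 / ε * R * F) :
    1 / ε * (k * (R - Rin))
      = -(k * (Rin / m) * F) + (-(ε * (k / m * Rt)) + k * ((Rin - R) / m) * F) := by
  rw [resource_sub_inflow_eq hε hm hRt]
  field_simp
  ring

theorem integral_neg_add_neg_const_mul_add {α : Type*} [MeasurableSpace α] {μ : Measure α}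
    {f g h : α → ℝ} (c : ℝ) (hf : Integrable f μ) (hg : Integrable g μ) (hh : Integrable h μ) :
    ∫ y, -f y + (-(c * g y) + h y) ∂μ = -∫ y, f y ∂μ + (-(c * ∫ y, g y ∂μ) + ∫ y, h y ∂μ) := by
  have hcg : Integrable (fun y => -(c * g y)) μ := (hg.const_mul c).neg
  have hcgh : Integrable (fun y => -(c * g y) + h y) μ := hcg.add hh
  rw [integral_add (f := fun y => -f y) hf.neg hcgh, integral_neg, integral_add hcg hh,
    integral_neg, integral_const_mul]

theorem growth_rate_rewriting_general (ε : ℝ) (hε : 0 < ε)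
    (a m Rin : ℝ → ℝ) (K : ℝ → ℝ → ℝ) (nE RE Rt : ℝ → ℝ → ℝ)
    (hm : ∀ y, 0 < m y)
    -- the resource equation, with time derivative Rt
    (hRt : ∀ y t, Rt y t
      = m y / ε^2 * (Rin y - RE y t) - (1/ε) * RE y t * ∫ x, K x y * nE x t)
    -- the consumer equation
    (hnpde : ∀ x t, HasDerivAt (fun s => nE x s)
      (nE x t * (a x + (1/ε) * ∫ y, K x y * (RE y t - Rin y))) t)
    -- differentiation under the integral sign is valid
    (hDt : ∀ x t, HasDerivAt (fun s => ∫ y, K x y / m y * RE y s)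
      (∫ y, K x y / m y * Rt y t) t)
    -- all integrals below are finite
    (hI1 : ∀ x t, Integrable (fun y => K x y * (Rin y / m y) * ∫ x', K x' y * nE x' t))
    (hI2 : ∀ x t, Integrable
      (fun y => K x y * ((Rin y - RE y t) / m y) * ∫ x', K x' y * nE x' t))
    (hI3 : ∀ x t, Integrable (fun y => K x y / m y * Rt y t))
    -- interchange of the order of integration (Fubini) is valid
    (hFub : ∀ x t, (∫ y, K x y * (Rin y / m y) * ∫ x', K x' y * nE x' t)
      = ∫ x', (∫ y, K x y * (Rin y / m y) * K x' y) * nE x' t) :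
    ∀ x t,
      (1/ε) * (∫ y, K x y * (RE y t - Rin y))
        = -(∫ x', (∫ y, K x y * (Rin y / m y) * K x' y) * nE x' t)
          + (-(ε * deriv (fun s => ∫ y, K x y / m y * RE y s) t)
             + ∫ y, K x y * ((Rin y - RE y t) / m y) * ∫ x', K x' y * nE x' t) ∧
      HasDerivAt (fun s => nE x s)
        (nE x t * (a x - (∫ x', (∫ y, K x y * (Rin y / m y) * K x' y) * nE x' t)
          + (-(ε * deriv (fun s => ∫ y, K x y / m y * RE y s) t)
             + ∫ y, K x y * ((Rin y - RE y t) / m y) * ∫ x', K x' y * nE x' t))) t := by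
  intro x t
  have growth : (1/ε) * (∫ y, K x y * (RE y t - Rin y))
      = -(∫ x', (∫ y, K x y * (Rin y / m y) * K x' y) * nE x' t)
        + (-(ε * deriv (fun s => ∫ y, K x y / m y * RE y s) t)
           + ∫ y, K x y * ((Rin y - RE y t) / m y) * ∫ x', K x' y * nE x' t) := by
    rw [(hDt x t).deriv, ← hFub x t, ← integral_const_mul,
      ← integral_neg_add_neg_const_mul_add ε (hI1 x t) (hI3 x t) (hI2 x t)]
    exact integral_congr_ae (.of_forall fun y =>
      inv_mul_consumption_eq (K x y) hε.ne' (hm y).ne' (hRt y t))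
  refine ⟨growth, ?_⟩
  convert hnpde x t using 2
  rw [growth]
  ring

/-- rewriting of the growth rate of `n_ε`:
`(1/ε) ∫ K(x,y)(R_ε(y,t) − R_in(y)) dy = −∫ c(x,x') n_ε(x',t) dx' + I_ε(x,t)`
with `c(x,x') = ∫ K(x,y)(R_in(y)/m(y))K(x',y) dy` and
`I_ε(x,t) = −ε ∂ₜ ∫ (K(x,y)/m(y)) R_ε(y,t) dy
  + ∫ K(x,y)((R_in(y) − R_ε(y,t))/m(y)) ∫ K(x',y) n_ε(x',t) dx' dy`,
and consequently
`∂ₜ n_ε = n_ε [a − ∫ c(x,x') n_ε(x',t) dx' + I_ε]`. -/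
theorem growth_rate_rewriting (ε : ℝ) (hε : 0 < ε)
    (a m Rin : ℝ → ℝ) (K : ℝ → ℝ → ℝ) (nE RE Rt : ℝ → ℝ → ℝ)
    (hm : ∀ y, 0 < m y) (hK : ∀ x y, 0 ≤ K x y) (hRin : ∀ y, 0 ≤ Rin y)
    -- the resource equation, with time derivative Rt
    (hRt : ∀ y t, Rt y t
      = m y / ε^2 * (Rin y - RE y t) - (1/ε) * RE y t * ∫ x, K x y * nE x t)
    (hRpde : ∀ y t, HasDerivAt (fun s => RE y s) (Rt y t) t)
    -- the consumer equation
    (hnpde : ∀ x t, HasDerivAt (fun s => nE x s)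
      (nE x t * (a x + (1/ε) * ∫ y, K x y * (RE y t - Rin y))) t)
    -- differentiation under the integral sign is valid
    (hDt : ∀ x t, HasDerivAt (fun s => ∫ y, K x y / m y * RE y s)
      (∫ y, K x y / m y * Rt y t) t)
    -- all integrals below are finite
    (hI1 : ∀ x t, Integrable (fun y => K x y * (Rin y / m y) * ∫ x', K x' y * nE x' t))
    (hI2 : ∀ x t, Integrable
      (fun y => K x y * ((Rin y - RE y t) / m y) * ∫ x', K x' y * nE x' t))
    (hI3 : ∀ x t, Integrable (fun y => K x y / m y * Rt y t))
    -- interchange of the order of integration (Fubini) is valid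
    (hFub : ∀ x t, (∫ y, K x y * (Rin y / m y) * ∫ x', K x' y * nE x' t)
      = ∫ x', (∫ y, K x y * (Rin y / m y) * K x' y) * nE x' t) :
    ∀ x t,
      (1/ε) * (∫ y, K x y * (RE y t - Rin y))
        = -(∫ x', (∫ y, K x y * (Rin y / m y) * K x' y) * nE x' t)
          + (-(ε * deriv (fun s => ∫ y, K x y / m y * RE y s) t)
             + ∫ y, K x y * ((Rin y - RE y t) / m y) * ∫ x', K x' y * nE x' t) ∧
      HasDerivAt (fun s => nE x s)
        (nE x t * (a x - (∫ x', (∫ y, K x y * (Rin y / m y) * K x' y) * nE x' t)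
          + (-(ε * deriv (fun s => ∫ y, K x y / m y * RE y s) t)
             + ∫ y, K x y * ((Rin y - RE y t) / m y) * ∫ x', K x' y * nE x' t))) t :=
  growth_rate_rewriting_general ε hε a m Rin K nE RE Rt hm hRt hnpde hDt hI1 hI2 hI3 hFub
end

section
/- Let K : ℝ × ℝ → ℝ be bounded, measurable and nonnegative, w : ℝ → [0,∞) integrable, and c(x,x') := ∫_ℝ K(x,y) w(y) K(x',y) dy. Let a : ℝ → ℝ be bounded and let n̄ : ℝ → [0,∞) be integrable with: a(x) − ∫_ℝ c(x,x') n̄(x') dx' ≤ 0 for all x ∈ ℝ, and a(x) − ∫_ℝ c(x,x') n̄(x') dx' = 0 at every x with n̄(x) > 0 (i.e. n̄ is an Evolutionary Stable Distribution). Then for every integrable n : ℝ → [0,∞), the dissipation D_dc := −∫_ℝ∫_ℝ c(x,x')(n(x) − n̄(x))(n(x') − n̄(x')) dx dx' + ∫_ℝ n(x)(a(x) − ∫_ℝ c(x,x') n̄(x') dx') dx satisfies D_dc ≤ 0. -/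
/-!
Writing `c(x,x') = ∫ K(x,y) w(y) K(x',y) dy` and applying Fubini twice turns the quadratic form
`∫∫ c(x,x') m(x) m(x') dx dx'` into `∫ w(y) (∫ K(x,y) m(x) dx)² dy ≥ 0`, where `m = n - n̄`.
The remaining term `∫ n (a - c n̄)` is nonpositive because `n ≥ 0` and `a - c n̄ ≤ 0` everywhere.
The boundedness of `K` makes every integrand in these exchanges integrable.
-/

open MeasureTheory Function

section KernelQuadraticForm

variable {α β : Type*} [MeasurableSpace α] {μ : Measure α} {K : α → β → ℝ} {C : ℝ}

theorem norm_integral_kernel_mul_le (hKC : ∀ x y, ‖K x y‖ ≤ C) {m : α → ℝ}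
    (hm : Integrable m μ) (y : β) : ‖∫ x, K x y * m x ∂μ‖ ≤ C * ∫ x, ‖m x‖ ∂μ := by
  rw [← integral_const_mul]
  refine norm_integral_le_of_norm_le (hm.norm.const_mul C) (.of_forall fun x => ?_)
  rw [norm_mul]
  exact mul_le_mul_of_nonneg_right (hKC x y) (norm_nonneg _)

variable [MeasurableSpace β] {ν : Measure β}

theorem aestronglyMeasurable_integral_kernel_mul [SFinite μ] [SFinite ν]
    (hK : Measurable (uncurry K)) {m : α → ℝ} (hm : Integrable m μ) :
    AEStronglyMeasurable (fun y => ∫ x, K x y * m x ∂μ) ν :=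
  AEStronglyMeasurable.integral_prod_right' (f := fun p : β × α => K p.2 p.1 * m p.2)
    ((hK.comp measurable_swap).aestronglyMeasurable.mul hm.1.comp_snd)

theorem integrable_kernel_mul_mul [SFinite ν] (hK : Measurable (uncurry K))
    (hKC : ∀ x y, ‖K x y‖ ≤ C) {m : α → ℝ} {h : β → ℝ} (hm : Integrable m μ)
    (hh : Integrable h ν) :
    Integrable (fun p : α × β => K p.1 p.2 * m p.1 * h p.2) (μ.prod ν) := by
  refine (hm.norm.mul_prod (hh.norm.const_mul C)).mono'
    ((hK.aestronglyMeasurable.mul hm.1.comp_fst).mul hh.1.comp_snd) (.of_forall fun p => ?_)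
  calc ‖K p.1 p.2 * m p.1 * h p.2‖ ≤ C * ‖m p.1‖ * ‖h p.2‖ := by
        rw [norm_mul, norm_mul]; gcongr; exact hKC _ _
    _ = ‖m p.1‖ * (C * ‖h p.2‖) := by ring

theorem integral_mul_integral_kernel_mul_comm [SFinite μ] [SFinite ν]
    (hK : Measurable (uncurry K)) (hKC : ∀ x y, ‖K x y‖ ≤ C) {m : α → ℝ} {h : β → ℝ}
    (hm : Integrable m μ) (hh : Integrable h ν) :
    ∫ x, m x * ∫ y, K x y * h y ∂ν ∂μ = ∫ y, h y * ∫ x, K x y * m x ∂μ ∂ν := calc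
  ∫ x, m x * ∫ y, K x y * h y ∂ν ∂μ = ∫ x, ∫ y, K x y * m x * h y ∂ν ∂μ := by
    congr 1 with x
    rw [← integral_const_mul]
    congr 1 with y
    ring
  _ = ∫ y, ∫ x, K x y * m x * h y ∂μ ∂ν :=
    integral_integral_swap (f := fun x y => K x y * m x * h y)
      (integrable_kernel_mul_mul hK hKC hm hh)
  _ = ∫ y, h y * ∫ x, K x y * m x ∂μ ∂ν := by
    congr 1 with y
    rw [← integral_const_mul]
    congr 1 with x
    ring

theorem integral_integral_kernel_quadratic_eq [SFinite μ] [SFinite ν]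
    (hK : Measurable (uncurry K)) (hKC : ∀ x y, ‖K x y‖ ≤ C) {w : β → ℝ}
    (hw : Integrable w ν) {m : α → ℝ} (hm : Integrable m μ) :
    ∫ x, ∫ x', (∫ y, K x y * w y * K x' y ∂ν) * m x * m x' ∂μ ∂μ
      = ∫ y, w y * (∫ x, K x y * m x ∂μ) ^ 2 ∂ν := by
  have hKw : ∀ x, Integrable (fun y => w y * K x y) ν := fun x =>
    hw.mul_bdd (hK.comp measurable_prodMk_left).aestronglyMeasurable (.of_forall (hKC x))
  have hwg : Integrable (fun y => w y * ∫ x, K x y * m x ∂μ) ν :=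
    hw.mul_bdd (aestronglyMeasurable_integral_kernel_mul hK hm)
      (.of_forall (norm_integral_kernel_mul_le hKC hm))
  calc ∫ x, ∫ x', (∫ y, K x y * w y * K x' y ∂ν) * m x * m x' ∂μ ∂μ
      = ∫ x, m x * ∫ x', m x' * ∫ y, K x' y * (w y * K x y) ∂ν ∂μ ∂μ := by
        congr 1 with x
        rw [← integral_const_mul]
        congr 1 with x'
        have hc : ∫ y, K x' y * (w y * K x y) ∂ν = ∫ y, K x y * w y * K x' y ∂ν := by
          congr 1 with y
          ring
        rw [hc]
        ring
    _ = ∫ x, m x * ∫ y, K x y * (w y * ∫ x', K x' y * m x' ∂μ) ∂ν ∂μ := by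
        congr 1 with x
        rw [integral_mul_integral_kernel_mul_comm hK hKC hm (hKw x)]
        congr 2 with y
        ring
    _ = ∫ y, w y * (∫ x, K x y * m x ∂μ) ^ 2 ∂ν := by
        rw [integral_mul_integral_kernel_mul_comm hK hKC hm hwg]
        simp only [sq, mul_assoc]

theorem integral_integral_kernel_quadratic_nonneg [SFinite μ] [SFinite ν]
    (hK : Measurable (uncurry K)) (hKC : ∀ x y, ‖K x y‖ ≤ C) {w : β → ℝ}
    (hw : Integrable w ν) (hw_nonneg : 0 ≤ᵐ[ν] w) {m : α → ℝ} (hm : Integrable m μ) :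
    0 ≤ ∫ x, ∫ x', (∫ y, K x y * w y * K x' y ∂ν) * m x * m x' ∂μ ∂μ := by
  rw [integral_integral_kernel_quadratic_eq hK hKC hw hm]
  exact integral_nonneg_of_ae <| hw_nonneg.mono fun y hy => mul_nonneg hy (sq_nonneg _)

end KernelQuadraticForm

theorem dissipation_nonpositive_general (K : ℝ → ℝ → ℝ) (w a nbar : ℝ → ℝ) (KM : ℝ)
    (hKmeas : Measurable (fun p : ℝ × ℝ => K p.1 p.2))
    (hKb : ∀ x y, K x y ≤ KM) (hK : ∀ x y, 0 ≤ K x y)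
    (hw : Integrable w) (hwnn : ∀ y, 0 ≤ w y)
    (hnbar : Integrable nbar)
    -- Evolutionary Stable Distribution conditions
    (hESDle : ∀ x, a x - (∫ x', (∫ y, K x y * w y * K x' y) * nbar x') ≤ 0) :
    ∀ n : ℝ → ℝ, Integrable n → (∀ x, 0 ≤ n x) →
      -(∫ x, ∫ x',
          (∫ y, K x y * w y * K x' y) * (n x - nbar x) * (n x' - nbar x'))
        + (∫ x, n x * (a x - ∫ x', (∫ y, K x y * w y * K x' y) * nbar x')) ≤ 0 := by
  intro n hn hnn
  have hKnorm : ∀ x y, ‖K x y‖ ≤ KM := fun x y => by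
    rw [Real.norm_of_nonneg (hK x y)]
    exact hKb x y
  have hquad : 0 ≤ ∫ x, ∫ x',
      (∫ y, K x y * w y * K x' y) * (n x - nbar x) * (n x' - nbar x') :=
    integral_integral_kernel_quadratic_nonneg hKmeas hKnorm hw (.of_forall hwnn) (hn.sub hnbar)
  have hlin : ∫ x, n x * (a x - ∫ x', (∫ y, K x y * w y * K x' y) * nbar x') ≤ 0 :=
    integral_nonpos fun x => mul_nonpos_of_nonneg_of_nonpos (hnn x) (hESDle x)
  linarith

/-- for the converted kernel `c(x,x') = ∫ K(x,y) w(y) K(x',y) dy`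
and an Evolutionary Stable Distribution `n̄`, the dissipation of the direct
competition Lyapunov functional is nonpositive. -/
theorem dissipation_nonpositive (K : ℝ → ℝ → ℝ) (w a nbar : ℝ → ℝ) (KM aM : ℝ)
    (hKmeas : Measurable (fun p : ℝ × ℝ => K p.1 p.2))
    (hKb : ∀ x y, K x y ≤ KM) (hK : ∀ x y, 0 ≤ K x y)
    (hw : Integrable w) (hwnn : ∀ y, 0 ≤ w y)
    (haM : ∀ x, |a x| ≤ aM)
    (hnbar : Integrable nbar) (hnbarnn : ∀ x, 0 ≤ nbar x)
    -- Evolutionary Stable Distribution conditions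
    (hESDle : ∀ x, a x - (∫ x', (∫ y, K x y * w y * K x' y) * nbar x') ≤ 0)
    (hESDeq : ∀ x, 0 < nbar x →
      a x - (∫ x', (∫ y, K x y * w y * K x' y) * nbar x') = 0) :
    ∀ n : ℝ → ℝ, Integrable n → (∀ x, 0 ≤ n x) →
      -(∫ x, ∫ x',
          (∫ y, K x y * w y * K x' y) * (n x - nbar x) * (n x' - nbar x'))
        + (∫ x, n x * (a x - ∫ x', (∫ y, K x y * w y * K x' y) * nbar x')) ≤ 0 :=
  dissipation_nonpositive_general K w a nbar KM hKmeas hKb hK hw hwnn hnbar hESDle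
end

section
/- Let c : ℝ × ℝ → ℝ be bounded, measurable and symmetric, a : ℝ → ℝ bounded, and let n̄ : ℝ → [0,∞) be integrable with a(x) = ∫_ℝ c(x,x') n̄(x') dx' at every x with n̄(x) > 0 (ESD equality condition). Let n : ℝ × [0,∞) → (0,∞) solve the direct competition equation ∂_t n(x,t) = n(x,t)[a(x) − ∫_ℝ c(x,x') n(x',t) dx'] for all x, t, with n(·,t) and n̄ ln n(·,t) integrable and differentiation under the integral sign valid. Then the Lyapunov functional S_dc(t) := −∫_ℝ n̄(x) ln n(x,t) dx + ∫_ℝ n(x,t) dx satisfies for all t ≥ 0: d/dt S_dc(t) = −∫_ℝ∫_ℝ c(x,x')(n(x,t) − n̄(x))(n(x',t) − n̄(x')) dx dx' + ∫_ℝ n(x,t)(a(x) − ∫_ℝ c(x,x') n̄(x') dx') dx. -/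
/-!
Since `∂ₜ ln n = a − ∫ c n`, the time derivative of `S_dc` is `∫ (n − n̄)(a − ∫ c n)`.
Splitting `a − ∫ c n = (a − ∫ c n̄) − ∫ c (n − n̄)` produces the quadratic form of `c` on
`n − n̄`, and the remaining term `∫ (n − n̄)(a − ∫ c n̄)` reduces to `∫ n (a − ∫ c n̄)` because
the ESD equality condition makes `n̄ (a − ∫ c n̄)` vanish identically.
-/

open MeasureTheory

section CompetitionIdentity

variable {α : Type*} [MeasurableSpace α] {μ : Measure α}

lemma integral_kernel_mul_sub {c : α → α → ℝ} {f g : α → ℝ} {x : α}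
    (hf : Integrable (fun x' => c x x' * f x') μ) (hg : Integrable (fun x' => c x x' * g x') μ) :
    ∫ x', c x x' * (f x' - g x') ∂μ = (∫ x', c x x' * f x' ∂μ) - ∫ x', c x x' * g x' ∂μ := by
  simp only [mul_sub]
  exact integral_sub hf hg

lemma mul_fitness_eq_zero_of_esd {c : α → α → ℝ} {a nbar : α → ℝ} {x : α}
    (hnbarnn : 0 ≤ nbar x) (hESD : 0 < nbar x → a x = ∫ x', c x x' * nbar x' ∂μ) :
    nbar x * (a x - ∫ x', c x x' * nbar x' ∂μ) = 0 := by
  rcases hnbarnn.eq_or_lt with h | h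
  · rw [← h, zero_mul]
  · rw [hESD h, sub_self, mul_zero]

lemma integral_integral_kernel_eq_integral_mul_integral (c : α → α → ℝ) (f : α → ℝ) :
    ∫ x, ∫ x', c x x' * f x * f x' ∂μ ∂μ = ∫ x, f x * ∫ x', c x x' * f x' ∂μ ∂μ := by
  congr 1 with x
  rw [← integral_const_mul]
  congr 1 with x'
  ring

theorem integral_mul_fitness_sub_eq {c : α → α → ℝ} {a nbar n : α → ℝ}
    (hnbarnn : ∀ x, 0 ≤ nbar x)
    (hESD : ∀ x, 0 < nbar x → a x = ∫ x', c x x' * nbar x' ∂μ)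
    (hcnint : ∀ x, Integrable (fun x' => c x x' * n x') μ)
    (hcnbarint : ∀ x, Integrable (fun x' => c x x' * nbar x') μ)
    (hint1 : Integrable (fun x => n x * (a x - ∫ x', c x x' * n x' ∂μ)) μ)
    (hint2 : Integrable (fun x => nbar x * (a x - ∫ x', c x x' * n x' ∂μ)) μ)
    (hint3 : Integrable (fun x => (n x - nbar x) * (a x - ∫ x', c x x' * nbar x' ∂μ)) μ)
    (hint4 : Integrable (fun x => (n x - nbar x) * ∫ x', c x x' * (n x' - nbar x') ∂μ) μ) :
    (∫ x, n x * (a x - ∫ x', c x x' * n x' ∂μ) ∂μ)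
        - ∫ x, nbar x * (a x - ∫ x', c x x' * n x' ∂μ) ∂μ
      = -(∫ x, ∫ x', c x x' * (n x - nbar x) * (n x' - nbar x') ∂μ ∂μ)
        + ∫ x, n x * (a x - ∫ x', c x x' * nbar x' ∂μ) ∂μ := by
  have hsplit : ∀ x, (n x - nbar x) * (a x - ∫ x', c x x' * n x' ∂μ)
      = (n x - nbar x) * (a x - ∫ x', c x x' * nbar x' ∂μ)
        - (n x - nbar x) * ∫ x', c x x' * (n x' - nbar x') ∂μ := by
    intro x
    rw [integral_kernel_mul_sub (hcnint x) (hcnbarint x)]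
    ring
  have hresidual : ∀ x, (n x - nbar x) * (a x - ∫ x', c x x' * nbar x' ∂μ)
      = n x * (a x - ∫ x', c x x' * nbar x' ∂μ) := by
    intro x
    rw [sub_mul, mul_fitness_eq_zero_of_esd (hnbarnn x) (hESD x), sub_zero]
  calc (∫ x, n x * (a x - ∫ x', c x x' * n x' ∂μ) ∂μ)
        - ∫ x, nbar x * (a x - ∫ x', c x x' * n x' ∂μ) ∂μ
      = ∫ x, (n x - nbar x) * (a x - ∫ x', c x x' * n x' ∂μ) ∂μ := by
        simp only [sub_mul]
        exact (integral_sub hint1 hint2).symm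
    _ = (∫ x, (n x - nbar x) * (a x - ∫ x', c x x' * nbar x' ∂μ) ∂μ)
        - ∫ x, (n x - nbar x) * ∫ x', c x x' * (n x' - nbar x') ∂μ ∂μ := by
        simp only [hsplit]
        exact integral_sub hint3 hint4
    _ = _ := by
        rw [integral_integral_kernel_eq_integral_mul_integral c (fun x => n x - nbar x)]
        simp only [hresidual]
        ring

end CompetitionIdentity

theorem direct_competition_lyapunov_derivative_general
    (c : ℝ → ℝ → ℝ) (a nbar : ℝ → ℝ)
    (hnbarnn : ∀ x, 0 ≤ nbar x)
    -- ESD equality condition on the support of n̄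
    (hESD : ∀ x, 0 < nbar x → a x = ∫ x', c x x' * nbar x')
    (n : ℝ → ℝ → ℝ)
    (hcnint : ∀ x t, Integrable (fun x' => c x x' * n x' t))
    (hcnbarint : ∀ x, Integrable (fun x' => c x x' * nbar x'))
    (hint1 : ∀ t, Integrable (fun x => n x t * (a x - ∫ x', c x x' * n x' t)))
    (hint2 : ∀ t, Integrable (fun x => nbar x * (a x - ∫ x', c x x' * n x' t)))
    (hint3 : ∀ t, Integrable
      (fun x => (n x t - nbar x) * (a x - ∫ x', c x x' * nbar x')))
    (hint4 : ∀ t, Integrable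
      (fun x => (n x t - nbar x) * ∫ x', c x x' * (n x' t - nbar x')))
    -- differentiation under the integral sign is valid
    (hd1 : ∀ t, HasDerivAt (fun s => ∫ x, n x s)
      (∫ x, n x t * (a x - ∫ x', c x x' * n x' t)) t)
    (hd2 : ∀ t, HasDerivAt (fun s => ∫ x, nbar x * Real.log (n x s))
      (∫ x, nbar x * (a x - ∫ x', c x x' * n x' t)) t) :
    ∀ t, 0 ≤ t →
      HasDerivAt (fun s => -(∫ x, nbar x * Real.log (n x s)) + ∫ x, n x s)
        (-(∫ x, ∫ x', c x x' * (n x t - nbar x) * (n x' t - nbar x'))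
          + ∫ x, n x t * (a x - ∫ x', c x x' * nbar x')) t := by
  intro t _
  have hidentity := integral_mul_fitness_sub_eq (n := fun x => n x t) hnbarnn hESD
    (fun x => hcnint x t) hcnbarint (hint1 t) (hint2 t) (hint3 t) (hint4 t)
  rw [← hidentity, sub_eq_neg_add]
  exact (hd2 t).neg.add (hd1 t)

/-- derivative of the direct competition Lyapunov functional
`S_dc(t) = −∫ n̄ ln n(·,t) + ∫ n(·,t)`:
`d/dt S_dc(t) = −∫∫ c(x,x')(n−n̄)(n−n̄) + ∫ n (a − ∫ c n̄)`. -/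
theorem direct_competition_lyapunov_derivative
    (c : ℝ → ℝ → ℝ) (a nbar : ℝ → ℝ) (cM aM : ℝ)
    (hcmeas : Measurable (fun p : ℝ × ℝ => c p.1 p.2))
    (hcb : ∀ x x', |c x x'| ≤ cM)
    (hcsym : ∀ x x', c x x' = c x' x)
    (haM : ∀ x, |a x| ≤ aM)
    (hnbar : Integrable nbar) (hnbarnn : ∀ x, 0 ≤ nbar x)
    -- ESD equality condition on the support of n̄
    (hESD : ∀ x, 0 < nbar x → a x = ∫ x', c x x' * nbar x')
    (n : ℝ → ℝ → ℝ)
    (hnpos : ∀ x t, 0 < n x t)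
    (hpde : ∀ x t, HasDerivAt (fun s => n x s)
      (n x t * (a x - ∫ x', c x x' * n x' t)) t)
    -- all integrals are finite
    (hnint : ∀ t, Integrable (fun x => n x t))
    (hlogint : ∀ t, Integrable (fun x => nbar x * Real.log (n x t)))
    (hcnint : ∀ x t, Integrable (fun x' => c x x' * n x' t))
    (hcnbarint : ∀ x, Integrable (fun x' => c x x' * nbar x'))
    (hint1 : ∀ t, Integrable (fun x => n x t * (a x - ∫ x', c x x' * n x' t)))
    (hint2 : ∀ t, Integrable (fun x => nbar x * (a x - ∫ x', c x x' * n x' t)))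
    (hint3 : ∀ t, Integrable
      (fun x => (n x t - nbar x) * (a x - ∫ x', c x x' * nbar x')))
    (hint4 : ∀ t, Integrable
      (fun x => (n x t - nbar x) * ∫ x', c x x' * (n x' t - nbar x')))
    -- differentiation under the integral sign is valid
    (hd1 : ∀ t, HasDerivAt (fun s => ∫ x, n x s)
      (∫ x, n x t * (a x - ∫ x', c x x' * n x' t)) t)
    (hd2 : ∀ t, HasDerivAt (fun s => ∫ x, nbar x * Real.log (n x s))
      (∫ x, nbar x * (a x - ∫ x', c x x' * n x' t)) t) :
    ∀ t, 0 ≤ t →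
      HasDerivAt (fun s => -(∫ x, nbar x * Real.log (n x s)) + ∫ x, n x s)
        (-(∫ x, ∫ x', c x x' * (n x t - nbar x) * (n x' t - nbar x'))
          + ∫ x, n x t * (a x - ∫ x', c x x' * nbar x')) t :=
  direct_competition_lyapunov_derivative_general c a nbar hnbarnn hESD n hcnint hcnbarint hint1
    hint2 hint3 hint4 hd1 hd2
end
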